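/- Let H be a complex Hilbert space, A a bounded linear operator on H, I ⊆ ℝ an open interval, and R : I → B(H) a differentiable map satisfying the Lyapunov equation R′(x) = −(A ∘ R(x) + R(x) ∘ A) for all x ∈ I. Suppose 1 + R(x) is invertible in B(H) for every x ∈ I and set F(x) = (1 + R(x))⁻¹. Then F is differentiable on I and F′(x) = A ∘ F(x) + F(x) ∘ A − 2·F(x) ∘ A ∘ F(x) for all x ∈ I. -/

import Mathlib

/-!
Differentiating `F = (1 + R)⁻¹` gives `F' = -F R' F = F (A R + R A) F`, and the relations
`R F = F R = 1 - F` turn this into `A F + F A - 2 F A F`.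
-/

open Filter Topology

section RingInverse

variable {𝕜 : Type*} [NontriviallyNormedField 𝕜] {R : Type*} [NormedRing R]
  [HasSummableGeomSeries R] [NormedAlgebra 𝕜 R]

theorem HasDerivAt.ringInverse {f : 𝕜 → R} {f' : R} {x : 𝕜} (hf : HasDerivAt f f' x)
    (hx : IsUnit (f x)) :
    HasDerivAt (fun y => Ring.inverse (f y))
      (-(Ring.inverse (f x) * f' * Ring.inverse (f x))) x := by
  obtain ⟨u, hu⟩ := hx
  rw [← hu, Ring.inverse_unit]
  exact ((hasFDerivAt_ringInverse u).comp_hasDerivAt_of_eq x hf hu).congr_deriv (by simp)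

theorem HasDerivAt.of_eventually_mul_eq_one {f g : 𝕜 → R} {f' : R} {x : 𝕜}
    (hf : HasDerivAt f f' x) (hfg : ∀ᶠ y in 𝓝 x, f y * g y = 1 ∧ g y * f y = 1) :
    HasDerivAt g (-(g x * f' * g x)) x := by
  have hg : (fun y => Ring.inverse (f y)) =ᶠ[𝓝 x] g :=
    hfg.mono fun y hy => Ring.inverse_unit ⟨f y, g y, hy.1, hy.2⟩
  have hunit : IsUnit (f x) := ⟨⟨f x, g x, hfg.self_of_nhds.1, hfg.self_of_nhds.2⟩, rfl⟩
  rw [← hg.eq_of_nhds]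
  exact (hf.ringInverse hunit).congr_of_eventuallyEq hg.symm

end RingInverse

theorem mul_anticommutator_mul_of_inverse_one_add {S : Type*} [Ring S] {a r f : S}
    (hrf : (1 + r) * f = 1) (hfr : f * (1 + r) = 1) :
    f * (a * r + r * a) * f = a * f + f * a - 2 * (f * a * f) := by
  have hrf' : r * f = 1 - f := eq_sub_of_add_eq' (by rwa [add_mul, one_mul] at hrf)
  have hfr' : f * r = 1 - f := eq_sub_of_add_eq' (by rwa [mul_add, mul_one] at hfr)
  calc f * (a * r + r * a) * f = f * a * (r * f) + (f * r) * (a * f) := by noncomm_ring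
    _ = a * f + f * a - 2 * (f * a * f) := by rw [hrf', hfr']; noncomm_ring

theorem inverse_deriv_lyapunov_general
    {H : Type*} [NormedAddCommGroup H] [InnerProductSpace ℂ H] [CompleteSpace H]
    (A : H →L[ℂ] H) (I : Set ℝ) (hI : IsOpen I)
    (R F : ℝ → (H →L[ℂ] H))
    (hR : ∀ x ∈ I, HasDerivAt R (-(A * R x + R x * A)) x)
    (hF : ∀ x ∈ I, (1 + R x) * F x = 1 ∧ F x * (1 + R x) = 1) :
    ∀ x ∈ I, HasDerivAt F (A * F x + F x * A - 2 * (F x * A * F x)) x := by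
  intro x hx
  have hF' := ((hR x hx).const_add 1).of_eventually_mul_eq_one
    (eventually_of_mem (hI.mem_nhds hx) hF)
  rw [mul_neg, neg_mul, neg_neg] at hF'
  rwa [mul_anticommutator_mul_of_inverse_one_add (hF x hx).1 (hF x hx).2] at hF'

/-- If `R` solves the Lyapunov equation `R' = -(A R + R A)` on an open interval and
`F = (1 + R)⁻¹`, then `F' = A F + F A - 2 F A F` (Lemma 3.1 of the paper, equation (3.2)). -/
theorem inverse_deriv_lyapunov
    {H : Type*} [NormedAddCommGroup H] [InnerProductSpace ℂ H] [CompleteSpace H]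
    (A : H →L[ℂ] H) (I : Set ℝ) (hI : IsOpen I) (hI' : I.OrdConnected)
    (R F : ℝ → (H →L[ℂ] H))
    (hR : ∀ x ∈ I, HasDerivAt R (-(A * R x + R x * A)) x)
    (hF : ∀ x ∈ I, (1 + R x) * F x = 1 ∧ F x * (1 + R x) = 1) :
    ∀ x ∈ I, HasDerivAt F (A * F x + F x * A - 2 * (F x * A * F x)) x :=
  inverse_deriv_lyapunov_general A I hI R F hR hF
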